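/- Let n ≥ 4 be an even integer and Λ = Cay(D_{2n}, Ψ) with Ψ = {b, ab, ..., a^{n-1}b} ∪ {a^{n/2}}. The set R = {a, a^2, ..., a^{n/2}} ∪ {ab, a^2b, ..., a^{n/2}b} is a resolving set of Λ. -/

import Mathlib

/-!
The graph is the complete bipartite graph between rotations and reflections together with the
perfect matching `x ↔ x a^{n/2}` inside each side. Hence vertices on opposite sides are at
distance 1, and vertices on the same side at distance 0, 1 (matched) or 2. The exponents
`1, …, n/2` meet every matched pair `{c, c + n/2}` exactly once, so the landmark on `u`'s side lying
in `u`'s pair separates `u` from every other vertex of that side. A rotation and a reflection are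
separated by a rotation landmark not matched to the rotation; one exists since `n/2 ≥ 2`.
-/

/-- The Cayley graph of a group with connection set `S`. -/
def cayley {G : Type*} [Group G] (S : Set G) : SimpleGraph G :=
  SimpleGraph.fromRel (fun x y => x⁻¹ * y ∈ S)

/-- The connection set `Ψ = {b, ab, …, a^{n-1}b} ∪ {a^{n/2}}` in the dihedral group. -/
def Psi (n : ℕ) : Set (DihedralGroup n) :=
  {x | ∃ i : ZMod n, x = DihedralGroup.sr i} ∪ {DihedralGroup.r ((n / 2 : ℕ) : ZMod n)}
/-- `R` is a resolving set of `G`: distinct vertices are distinguished by distances to `R`. -/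
def IsResolvingSet {V : Type*} (G : SimpleGraph V) (R : Set V) : Prop :=
  ∀ u v : V, u ≠ v → ∃ r ∈ R, G.dist u r ≠ G.dist v r

open DihedralGroup SimpleGraph

lemma SimpleGraph.dist_eq_two_of_adj_of_adj {V : Type*} {G : SimpleGraph V} {u v w : V}
    (hne : u ≠ v) (hnadj : ¬G.Adj u v) (huw : G.Adj u w) (hwv : G.Adj w v) :
    G.dist u v = 2 := by
  have hedist : G.edist u v = 2 :=
    edist_eq_two_iff.2 ⟨hne, hnadj, w, (G.mem_commonNeighbors).2 ⟨huw, hwv.symm⟩⟩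
  exact_mod_cast (huw.reachable.trans hwv.reachable).coe_dist_eq_edist.trans hedist

namespace ZMod

variable {n : ℕ}

lemma half_add_half (hev : Even n) :
    ((n / 2 : ℕ) : ZMod n) + ((n / 2 : ℕ) : ZMod n) = 0 := by
  obtain ⟨m, rfl⟩ := hev
  rw [← Nat.cast_add, show (m + m) / 2 + (m + m) / 2 = m + m by omega, natCast_self]

lemma half_ne_zero (hn : 2 ≤ n) : ((n / 2 : ℕ) : ZMod n) ≠ 0 := by
  have : NeZero n := ⟨by omega⟩
  rw [Ne, ← val_eq_zero, val_cast_of_lt (by omega)]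
  omega

lemma ne_and_sub_eq_half_iff (hn : 2 ≤ n) (hev : Even n) {a c : ZMod n} :
    (a ≠ c ∧ (c - a = ((n / 2 : ℕ) : ZMod n) ∨ a - c = ((n / 2 : ℕ) : ZMod n))) ↔
      a = c + ((n / 2 : ℕ) : ZMod n) := by
  have hh := half_add_half hev
  have h0 := half_ne_zero hn
  constructor
  · rintro ⟨-, h | h⟩
    · linear_combination -h - hh
    · linear_combination h
  · rintro rfl
    exact ⟨by simpa using h0, Or.inr (by ring)⟩

lemma exists_natCast_eq_or_eq_add_half (hn : 2 ≤ n) (hev : Even n) (a : ZMod n) :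
    ∃ i : ℕ, 1 ≤ i ∧ i ≤ n / 2 ∧ (a = i ∨ a = i + ((n / 2 : ℕ) : ZMod n)) := by
  have : NeZero n := ⟨by omega⟩
  have hval : ((a.val : ℕ) : ZMod n) = a := natCast_zmod_val a
  have hlt : a.val < n := val_lt a
  by_cases hlow : 1 ≤ a.val ∧ a.val ≤ n / 2
  · exact ⟨a.val, hlow.1, hlow.2, Or.inl hval.symm⟩
  by_cases hzero : a.val = 0
  · rw [val_eq_zero] at hzero
    exact ⟨n / 2, by omega, le_rfl, Or.inr (by rw [hzero, half_add_half hev])⟩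
  · refine ⟨a.val - n / 2, by omega, by omega, Or.inr ?_⟩
    rw [Nat.cast_sub (by omega), hval]
    ring

end ZMod

namespace DihedralGroup

variable {n : ℕ}

lemma r_mem_Psi_iff (a : ZMod n) : r a ∈ Psi n ↔ a = ((n / 2 : ℕ) : ZMod n) := by
  simp [Psi]

lemma sr_mem_Psi (a : ZMod n) : sr a ∈ Psi n := Or.inl ⟨a, rfl⟩

lemma adj_r_sr (a b : ZMod n) : (cayley (Psi n)).Adj (r a) (sr b) :=
  ⟨by simp, Or.inl (by simp only [inv_r, r_mul_sr, sr_mem_Psi])⟩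

lemma adj_r_r_iff (hn : 2 ≤ n) (hev : Even n) {a c : ZMod n} :
    (cayley (Psi n)).Adj (r a) (r c) ↔ a = c + ((n / 2 : ℕ) : ZMod n) := by
  simp only [cayley, fromRel_adj, ne_eq, r.injEq, inv_r, r_mul_r, r_mem_Psi_iff, neg_add_eq_sub]
  exact ZMod.ne_and_sub_eq_half_iff hn hev

lemma adj_sr_sr_iff (hn : 2 ≤ n) (hev : Even n) {a c : ZMod n} :
    (cayley (Psi n)).Adj (sr a) (sr c) ↔ a = c + ((n / 2 : ℕ) : ZMod n) := by
  simp only [cayley, fromRel_adj, ne_eq, sr.injEq, inv_sr, sr_mul_sr, r_mem_Psi_iff]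
  exact ZMod.ne_and_sub_eq_half_iff hn hev

def cosetDist (n : ℕ) (a c : ZMod n) : ℕ :=
  if a = c then 0 else if a = c + ((n / 2 : ℕ) : ZMod n) then 1 else 2

lemma cosetDist_ne_one {a c : ZMod n} (h : a ≠ c + ((n / 2 : ℕ) : ZMod n)) :
    cosetDist n a c ≠ 1 := by
  unfold cosetDist
  split_ifs <;> simp

lemma cosetDist_ne_cosetDist (hn : 2 ≤ n) {a b c : ZMod n} (hab : a ≠ b)
    (hac : a = c ∨ a = c + ((n / 2 : ℕ) : ZMod n)) : cosetDist n a c ≠ cosetDist n b c := by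
  unfold cosetDist
  rcases hac with rfl | rfl
  · rw [if_pos rfl, if_neg (Ne.symm hab)]
    split_ifs <;> simp
  · rw [if_neg (by simpa using ZMod.half_ne_zero hn), if_pos rfl, if_neg (Ne.symm hab)]
    split_ifs <;> simp

lemma dist_r_sr (a b : ZMod n) : (cayley (Psi n)).dist (r a) (sr b) = 1 :=
  dist_eq_one_iff_adj.2 (adj_r_sr a b)

lemma dist_r_r (hn : 2 ≤ n) (hev : Even n) (a c : ZMod n) :
    (cayley (Psi n)).dist (r a) (r c) = cosetDist n a c := by
  unfold cosetDist
  split_ifs with heq hhalf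
  · rw [heq, dist_self]
  · exact dist_eq_one_iff_adj.2 ((adj_r_r_iff hn hev).2 hhalf)
  · exact dist_eq_two_of_adj_of_adj (by simpa using heq) (mt (adj_r_r_iff hn hev).1 hhalf)
      (adj_r_sr a 0) (adj_r_sr c 0).symm

lemma dist_sr_sr (hn : 2 ≤ n) (hev : Even n) (a c : ZMod n) :
    (cayley (Psi n)).dist (sr a) (sr c) = cosetDist n a c := by
  unfold cosetDist
  split_ifs with heq hhalf
  · rw [heq, dist_self]
  · exact dist_eq_one_iff_adj.2 ((adj_sr_sr_iff hn hev).2 hhalf)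
  · exact dist_eq_two_of_adj_of_adj (by simpa using heq) (mt (adj_sr_sr_iff hn hev).1 hhalf)
      (adj_r_sr 0 a).symm (adj_r_sr 0 c)

def landmarks (n : ℕ) : Set (DihedralGroup n) :=
  {x | ∃ i : ℕ, 1 ≤ i ∧ i ≤ n / 2 ∧ (x = r 1 ^ i ∨ x = r 1 ^ i * sr 0)}

lemma r_natCast_mem_landmarks {i : ℕ} (h1 : 1 ≤ i) (h2 : i ≤ n / 2) :
    r (i : ZMod n) ∈ landmarks n :=
  ⟨i, h1, h2, Or.inl (r_one_pow i).symm⟩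

lemma sr_neg_natCast_mem_landmarks {i : ℕ} (h1 : 1 ≤ i) (h2 : i ≤ n / 2) :
    sr (-(i : ZMod n)) ∈ landmarks n :=
  ⟨i, h1, h2, Or.inr (by rw [r_one_pow, r_mul_sr, zero_sub])⟩

lemma exists_landmark_dist_r_ne (hn : 2 ≤ n) (hev : Even n) {a b : ZMod n} (hab : a ≠ b) :
    ∃ x ∈ landmarks n, (cayley (Psi n)).dist (r a) x ≠ (cayley (Psi n)).dist (r b) x := by
  obtain ⟨i, hi1, hi2, hai⟩ := ZMod.exists_natCast_eq_or_eq_add_half hn hev a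
  refine ⟨r i, r_natCast_mem_landmarks hi1 hi2, ?_⟩
  rw [dist_r_r hn hev, dist_r_r hn hev]
  exact cosetDist_ne_cosetDist hn hab hai

lemma exists_landmark_dist_sr_ne (hn : 2 ≤ n) (hev : Even n) {a b : ZMod n} (hab : a ≠ b) :
    ∃ x ∈ landmarks n, (cayley (Psi n)).dist (sr a) x ≠ (cayley (Psi n)).dist (sr b) x := by
  obtain ⟨i, hi1, hi2, hai⟩ := ZMod.exists_natCast_eq_or_eq_add_half hn hev (-a)
  refine ⟨sr (-i), sr_neg_natCast_mem_landmarks hi1 hi2, ?_⟩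
  rw [dist_sr_sr hn hev, dist_sr_sr hn hev]
  refine cosetDist_ne_cosetDist hn hab (hai.imp (fun h => ?_) (fun h => ?_))
  · linear_combination -h
  · linear_combination -h - ZMod.half_add_half hev

lemma exists_landmark_dist_r_ne_dist_sr (hn : 4 ≤ n) (hev : Even n) (a b : ZMod n) :
    ∃ x ∈ landmarks n, (cayley (Psi n)).dist (r a) x ≠ (cayley (Psi n)).dist (sr b) x := by
  obtain ⟨i, hi1, hi2, hai⟩ : ∃ i : ℕ, 1 ≤ i ∧ i ≤ n / 2 ∧ a ≠ i + ((n / 2 : ℕ) : ZMod n) := by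
    by_cases ha : a = ((1 : ℕ) : ZMod n) + ((n / 2 : ℕ) : ZMod n)
    · refine ⟨2, by omega, by omega, fun ha' => ?_⟩
      have h12 : ((1 : ℕ) : ZMod n) = (2 : ℕ) := by linear_combination ha' - ha
      rw [ZMod.natCast_eq_natCast_iff', Nat.mod_eq_of_lt (by omega),
        Nat.mod_eq_of_lt (by omega)] at h12
      omega
    · exact ⟨1, le_rfl, by omega, ha⟩
  refine ⟨r i, r_natCast_mem_landmarks hi1 hi2, ?_⟩
  rw [dist_r_r (by omega) hev, dist_comm (u := sr b), dist_r_sr]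
  exact cosetDist_ne_one hai

end DihedralGroup

theorem cayley_resolving_set (n : ℕ) (hn : 4 ≤ n) (hev : Even n) :
    IsResolvingSet (cayley (Psi n))
      {x : DihedralGroup n | ∃ i : ℕ, 1 ≤ i ∧ i ≤ n / 2 ∧
        (x = (DihedralGroup.r 1) ^ i ∨ x = (DihedralGroup.r 1) ^ i * DihedralGroup.sr 0)} := by
  change IsResolvingSet _ (landmarks n)
  rintro (a | a) (b | b) hne
  · exact exists_landmark_dist_r_ne (by omega) hev (by simpa using hne)
  · exact exists_landmark_dist_r_ne_dist_sr hn hev a b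
  · obtain ⟨x, hx, hdist⟩ := exists_landmark_dist_r_ne_dist_sr hn hev b a
    exact ⟨x, hx, hdist.symm⟩
  · exact exists_landmark_dist_sr_ne (by omega) hev (by simpa using hne)
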